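/- arXiv:q-alg/9507008 — 2 statements merged into one kernel-verified Lean document; each statement's English description precedes it below -/
import Mathlib

section
/- Let A be an associative ℂ-algebra, r ∈ ℕ, δ ∈ ℂ, and θ ∈ A a central element with θ^(r+1) = 0. Let H, J₊⁽ᵐ⁾, J₋⁽ᵐ⁾ ∈ A for 0 ≤ m ≤ r, and P_j ∈ A for 0 ≤ j ≤ ⌊r/2⌋, satisfy: (i) [H, J₊⁽ᵐ⁾] = 2J₊⁽ᵐ⁾ and [H, J₋⁽ᵐ⁾] = −2J₋⁽ᵐ⁾ for all m; (ii) Σ_{m=0}^{2j} [J₊⁽ᵐ⁾, J₋⁽²ʲ⁻ᵐ⁾] = P_j for every j with 2j ≤ r; (iii) Σ_{m=0}^{k} [J₊⁽ᵐ⁾, J₋⁽ᵏ⁻ᵐ⁾] = 0 for every odd k ≤ r. Define J₊^θ = Σ_{m=0}^{r} δ^m θ^m J₊⁽ᵐ⁾ and J₋^θ = Σ_{m=0}^{r} δ^m θ^m J₋⁽ᵐ⁾. Then [H, J₊^θ] = 2J₊^θ, [H, J₋^θ] = −2J₋^θ, and [J₊^θ, J₋^θ] = Σ_{j=0}^{⌊r/2⌋}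 δ^{2j} θ^{2j} P_j. -/
lemma tri_sum {M : Type*} [AddCommMonoid M] (f : ℕ → ℕ → M) :
    ∀ N : ℕ, ∑ m ∈ Finset.range N, ∑ n ∈ Finset.range (N - m), f m n
      = ∑ k ∈ Finset.range N, ∑ m ∈ Finset.range (k + 1), f m (k - m) := by
  intro N
  induction N with
  | zero => simp
  | succ N ih =>
    have h1 : ∀ m ∈ Finset.range (N + 1),
        ∑ n ∈ Finset.range (N + 1 - m), f m n
          = ∑ n ∈ Finset.range (N - m), f m n + f m (N - m) := by
      intro m hm
      rw [show N + 1 - m = (N - m) + 1 by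
        have := Finset.mem_range.mp hm; omega, Finset.sum_range_succ]
    rw [Finset.sum_congr rfl h1, Finset.sum_add_distrib,
      Finset.sum_range_succ (fun m => ∑ n ∈ Finset.range (N - m), f m n)]
    simp only [Nat.sub_self, Finset.range_zero, Finset.sum_empty, add_zero]
    rw [ih, Finset.sum_range_succ
      (fun k => ∑ m ∈ Finset.range (k + 1), f m (k - m)) N,
      Finset.sum_range_succ (fun m => f m (N - m)) N]

lemma parity_sum {M : Type*} [AddCommMonoid M] (g : ℕ → M) :
    ∀ r : ℕ, (∀ k ≤ r, Odd k → g k = 0) →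
      ∑ k ∈ Finset.range (r + 1), g k = ∑ j ∈ Finset.range (r / 2 + 1), g (2 * j) := by
  intro r
  induction r with
  | zero => intro _; simp
  | succ r ih =>
    intro h
    rw [Finset.sum_range_succ]
    rcases Nat.even_or_odd (r + 1) with he | ho
    · obtain ⟨t, ht⟩ := he
      have h2 : (r + 1) / 2 = r / 2 + 1 := by omega
      have h3 : 2 * (r / 2 + 1) = r + 1 := by omega
      rw [h2, ih (fun k hk hodd => h k (by omega) hodd),
        Finset.sum_range_succ (fun j => g (2 * j)) (r / 2 + 1), h3]
    · obtain ⟨t, ht⟩ := ho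
      have h0 := h (r + 1) le_rfl ⟨t, ht⟩
      have h2 : (r + 1) / 2 = r / 2 := by omega
      rw [h0, add_zero, h2, ih (fun k hk hodd => h k (by omega) hodd)]

/-- The defining computation of the paragrassmannian deformation `U_q^r(sl(2))`:
if `θ` is a central element with `θ^(r+1) = 0`, the families `J₊⁽ᵐ⁾, J₋⁽ᵐ⁾`
(for `0 ≤ m ≤ r`) satisfy `[H, J₊⁽ᵐ⁾] = 2J₊⁽ᵐ⁾`, `[H, J₋⁽ᵐ⁾] = −2J₋⁽ᵐ⁾`,
`Σ_{m=0}^{2j} [J₊⁽ᵐ⁾, J₋⁽²ʲ⁻ᵐ⁾] = P_j` for `2j ≤ r`, and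
`Σ_{m=0}^{k} [J₊⁽ᵐ⁾, J₋⁽ᵏ⁻ᵐ⁾] = 0` for odd `k ≤ r`, then the elements
`J_±^θ = Σ_{m=0}^r δ^m θ^m J_±⁽ᵐ⁾` satisfy `[H, J_±^θ] = ±2 J_±^θ` and
`[J₊^θ, J₋^θ] = Σ_{j=0}^{⌊r/2⌋} δ^{2j} θ^{2j} P_j`. -/
theorem paragrassmann_deformation_relations
    (A : Type*) [Ring A] [Algebra ℂ A] (r : ℕ) (δ : ℂ) (θ : A)
    (hθc : ∀ a : A, θ * a = a * θ) (hθnil : θ ^ (r + 1) = 0)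
    (H : A) (Jp Jm P : ℕ → A)
    (hp : ∀ m ≤ r, H * Jp m - Jp m * H = 2 * Jp m)
    (hm : ∀ m ≤ r, H * Jm m - Jm m * H = -(2 * Jm m))
    (heven : ∀ j, 2 * j ≤ r →
      ∑ m ∈ Finset.range (2 * j + 1),
        (Jp m * Jm (2 * j - m) - Jm (2 * j - m) * Jp m) = P j)
    (hodd : ∀ k ≤ r, Odd k →
      ∑ m ∈ Finset.range (k + 1),
        (Jp m * Jm (k - m) - Jm (k - m) * Jp m) = 0) :
    (H * (∑ m ∈ Finset.range (r + 1), δ ^ m • (θ ^ m * Jp m)) -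
        (∑ m ∈ Finset.range (r + 1), δ ^ m • (θ ^ m * Jp m)) * H =
      2 * ∑ m ∈ Finset.range (r + 1), δ ^ m • (θ ^ m * Jp m)) ∧
    (H * (∑ m ∈ Finset.range (r + 1), δ ^ m • (θ ^ m * Jm m)) -
        (∑ m ∈ Finset.range (r + 1), δ ^ m • (θ ^ m * Jm m)) * H =
      -(2 * ∑ m ∈ Finset.range (r + 1), δ ^ m • (θ ^ m * Jm m))) ∧
    ((∑ m ∈ Finset.range (r + 1), δ ^ m • (θ ^ m * Jp m)) *
        (∑ m ∈ Finset.range (r + 1), δ ^ m • (θ ^ m * Jm m)) -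
      (∑ m ∈ Finset.range (r + 1), δ ^ m • (θ ^ m * Jm m)) *
        (∑ m ∈ Finset.range (r + 1), δ ^ m • (θ ^ m * Jp m)) =
      ∑ j ∈ Finset.range (r / 2 + 1), δ ^ (2 * j) • (θ ^ (2 * j) * P j)) := by
  -- powers of θ are central
  have commθ : ∀ (k : ℕ) (a : A), θ ^ k * a = a * θ ^ k := by
    intro k a
    induction k with
    | zero => simp
    | succ k ih =>
      rw [pow_succ, mul_assoc, hθc a, ← mul_assoc, ih, mul_assoc]
  have hzero : ∀ k : ℕ, r + 1 ≤ k → θ ^ k = 0 := by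
    intro k hk
    rw [show k = (r + 1) + (k - (r + 1)) by omega, pow_add, hθnil, zero_mul]
  -- H-commutator with one term
  have key : ∀ (J : ℕ → A) (c : A), (∀ m ≤ r, H * J m - J m * H = c * J m) →
      H * (∑ m ∈ Finset.range (r + 1), δ ^ m • (θ ^ m * J m)) -
        (∑ m ∈ Finset.range (r + 1), δ ^ m • (θ ^ m * J m)) * H =
      c * ∑ m ∈ Finset.range (r + 1), δ ^ m • (θ ^ m * J m) := by
    intro J c hJ
    rw [Finset.mul_sum, Finset.sum_mul, ← Finset.sum_sub_distrib, Finset.mul_sum]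
    refine Finset.sum_congr rfl fun m hmem => ?_
    have hmr : m ≤ r := by have := Finset.mem_range.mp hmem; omega
    rw [mul_smul_comm, smul_mul_assoc, ← smul_sub, mul_smul_comm]
    congr 1
    calc H * (θ ^ m * J m) - θ ^ m * J m * H
        = θ ^ m * (H * J m) - θ ^ m * (J m * H) := by
          rw [← mul_assoc, ← commθ m H, mul_assoc, mul_assoc]
      _ = θ ^ m * (H * J m - J m * H) := by rw [mul_sub]
      _ = θ ^ m * (c * J m) := by rw [hJ m hmr]
      _ = c * (θ ^ m * J m) := by rw [← mul_assoc, commθ m c, mul_assoc]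
  have hrearr : ∀ (m n : ℕ) (a b : A),
      (δ ^ m • (θ ^ m * a)) * (δ ^ n • (θ ^ n * b))
        = δ ^ (m + n) • (θ ^ (m + n) * (a * b)) := by
    intro m n a b
    rw [smul_mul_assoc, mul_smul_comm, smul_smul, ← pow_add]
    congr 1
    calc θ ^ m * a * (θ ^ n * b) = θ ^ m * (a * θ ^ n * b) := by
          rw [mul_assoc, ← mul_assoc a]
      _ = θ ^ m * (θ ^ n * a * b) := by rw [← commθ n a]
      _ = θ ^ (m + n) * (a * b) := by rw [pow_add, mul_assoc, mul_assoc]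
  refine ⟨key Jp 2 hp, ?_, ?_⟩
  · have := key Jm (-2) (fun m hmr => by rw [hm m hmr, neg_mul])
    rw [this, neg_mul]
  · -- the Cauchy-product computation
    set f : ℕ → ℕ → A := fun m n =>
      δ ^ (m + n) • (θ ^ (m + n) * (Jp m * Jm n - Jm n * Jp m)) with hf
    have step1 :
        (∑ m ∈ Finset.range (r + 1), δ ^ m • (θ ^ m * Jp m)) *
          (∑ m ∈ Finset.range (r + 1), δ ^ m • (θ ^ m * Jm m)) -
        (∑ m ∈ Finset.range (r + 1), δ ^ m • (θ ^ m * Jm m)) *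
          (∑ m ∈ Finset.range (r + 1), δ ^ m • (θ ^ m * Jp m)) =
        ∑ m ∈ Finset.range (r + 1), ∑ n ∈ Finset.range (r + 1), f m n := by
      have e1 : (∑ m ∈ Finset.range (r + 1), δ ^ m • (θ ^ m * Jp m)) *
          (∑ m ∈ Finset.range (r + 1), δ ^ m • (θ ^ m * Jm m)) =
          ∑ m ∈ Finset.range (r + 1), ∑ n ∈ Finset.range (r + 1),
            δ ^ (m + n) • (θ ^ (m + n) * (Jp m * Jm n)) := by
        rw [Finset.sum_mul_sum]
        exact Finset.sum_congr rfl fun m _ =>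
          Finset.sum_congr rfl fun n _ => hrearr m n (Jp m) (Jm n)
      have e2 : (∑ m ∈ Finset.range (r + 1), δ ^ m • (θ ^ m * Jm m)) *
          (∑ m ∈ Finset.range (r + 1), δ ^ m • (θ ^ m * Jp m)) =
          ∑ m ∈ Finset.range (r + 1), ∑ n ∈ Finset.range (r + 1),
            δ ^ (m + n) • (θ ^ (m + n) * (Jm n * Jp m)) := by
        rw [Finset.sum_mul_sum, Finset.sum_comm]
        refine Finset.sum_congr rfl fun m _ => Finset.sum_congr rfl fun n _ => ?_
        rw [hrearr n m (Jm n) (Jp m), Nat.add_comm n m]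
      rw [e1, e2, ← Finset.sum_sub_distrib]
      refine Finset.sum_congr rfl fun m _ => ?_
      rw [← Finset.sum_sub_distrib]
      refine Finset.sum_congr rfl fun n _ => ?_
      rw [hf]
      simp only
      rw [← smul_sub, ← mul_sub]
    have hvanish : ∀ m n : ℕ, r + 1 ≤ m + n → f m n = 0 := by
      intro m n hmn
      rw [hf]; simp only
      rw [hzero (m + n) hmn, zero_mul, smul_zero]
    have step2 : ∀ m ∈ Finset.range (r + 1),
        ∑ n ∈ Finset.range (r + 1), f m n = ∑ n ∈ Finset.range (r + 1 - m), f m n := by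
      intro m hmem
      have hmr : m ≤ r := by have := Finset.mem_range.mp hmem; omega
      refine (Finset.sum_subset (Finset.range_subset_range.mpr (by omega)) ?_).symm
      intro n _ hn
      exact hvanish m n (by have := Finset.mem_range.not.mp hn; omega)
    rw [step1, Finset.sum_congr rfl step2, tri_sum f (r + 1)]
    have step3 : ∀ k ∈ Finset.range (r + 1),
        ∑ m ∈ Finset.range (k + 1), f m (k - m)
          = δ ^ k • (θ ^ k * ∑ m ∈ Finset.range (k + 1),
              (Jp m * Jm (k - m) - Jm (k - m) * Jp m)) := by
      intro k _
      rw [Finset.mul_sum, Finset.smul_sum]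
      refine Finset.sum_congr rfl fun m hmem => ?_
      have hmk : m ≤ k := by have := Finset.mem_range.mp hmem; omega
      rw [hf]; simp only
      rw [show m + (k - m) = k by omega]
    rw [Finset.sum_congr rfl step3]
    refine (parity_sum _ (r + 1 - 1) ?_).trans ?_ <;> simp only [Nat.add_sub_cancel]
    · intro k hk hko
      rw [hodd k hk hko, mul_zero, smul_zero]
    · refine Finset.sum_congr rfl fun j hj => ?_
      have hjr : 2 * j ≤ r := by
        have := Finset.mem_range.mp hj; omega
      rw [heven j hjr]
end

section
/- Let A be an associative ℂ-algebra, δ ∈ ℂ, and θ ∈ A a central element with θ³ = 0. Suppose H, J₊⁽⁰⁾, J₊⁽¹⁾, J₊⁽²⁾, J₋⁽⁰⁾, J₋⁽¹⁾, J₋⁽²⁾ ∈ A satisfy [H, J₊⁽ᵐ⁾] = 2J₊⁽ᵐ⁾ and [H, J₋⁽ᵐ⁾] = −2J₋⁽ᵐ⁾ for m = 0,1,2, together with [J₊⁽⁰⁾, J₋⁽⁰⁾] = H, [J₊⁽⁰⁾, J₋⁽¹⁾] + [J₊⁽¹⁾, J₋⁽⁰⁾] = 0, and [J₊⁽⁰⁾,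 J₋⁽²⁾] + [J₊⁽¹⁾, J₋⁽¹⁾] + [J₊⁽²⁾, J₋⁽⁰⁾] = (H³ − H)/6. Then J_±^θ := Σ_{m=0}^{2} δ^m θ^m J_±⁽ᵐ⁾ satisfy [H, J_±^θ] = ±2J_±^θ and [J₊^θ, J₋^θ] = H + θ²δ²(H³ − H)/6; i.e., the r = 2 paragrassmannian deformation realizes a Higgs-type algebra [J₊, J₋] = H + cH³ − cH with central nilpotent parameter c = θ²δ²/6. -/
/-- The `r = 2` paragrassmannian deformation realizes a Higgs-type algebra:
if `θ` is central with `θ³ = 0` and `H, J_±⁽⁰⁾, J_±⁽¹⁾, J_±⁽²⁾` satisfy the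
`δ`-coefficient relations of `U_q(sl(2))` through order 2 (with `ψ₀(H) = H`
and `ψ₁(H) = (H³ − H)/6`), then `J_±^θ = Σ_{m=0}^{2} δ^m θ^m J_±⁽ᵐ⁾` satisfy
`[H, J_±^θ] = ±2 J_±^θ` and `[J₊^θ, J₋^θ] = H + θ²δ²(H³ − H)/6`. -/
theorem higgs_algebra_from_r_two_paragrassmann
    (A : Type*) [Ring A] [Algebra ℂ A] (δ : ℂ) (θ : A)
    (hθc : ∀ a : A, θ * a = a * θ) (hθnil : θ ^ 3 = 0)
    (H Jp0 Jp1 Jp2 Jm0 Jm1 Jm2 : A)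
    (hp0 : H * Jp0 - Jp0 * H = 2 * Jp0)
    (hp1 : H * Jp1 - Jp1 * H = 2 * Jp1)
    (hp2 : H * Jp2 - Jp2 * H = 2 * Jp2)
    (hm0 : H * Jm0 - Jm0 * H = -(2 * Jm0))
    (hm1 : H * Jm1 - Jm1 * H = -(2 * Jm1))
    (hm2 : H * Jm2 - Jm2 * H = -(2 * Jm2))
    (h00 : Jp0 * Jm0 - Jm0 * Jp0 = H)
    (h01 : (Jp0 * Jm1 - Jm1 * Jp0) + (Jp1 * Jm0 - Jm0 * Jp1) = 0)
    (h02 : (Jp0 * Jm2 - Jm2 * Jp0) + (Jp1 * Jm1 - Jm1 * Jp1) +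
        (Jp2 * Jm0 - Jm0 * Jp2) = ((6 : ℂ)⁻¹) • (H ^ 3 - H)) :
    (H * (Jp0 + δ • (θ * Jp1) + (δ ^ 2) • (θ ^ 2 * Jp2)) -
        (Jp0 + δ • (θ * Jp1) + (δ ^ 2) • (θ ^ 2 * Jp2)) * H =
      2 * (Jp0 + δ • (θ * Jp1) + (δ ^ 2) • (θ ^ 2 * Jp2))) ∧
    (H * (Jm0 + δ • (θ * Jm1) + (δ ^ 2) • (θ ^ 2 * Jm2)) -
        (Jm0 + δ • (θ * Jm1) + (δ ^ 2) • (θ ^ 2 * Jm2)) * H =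
      -(2 * (Jm0 + δ • (θ * Jm1) + (δ ^ 2) • (θ ^ 2 * Jm2)))) ∧
    ((Jp0 + δ • (θ * Jp1) + (δ ^ 2) • (θ ^ 2 * Jp2)) *
        (Jm0 + δ • (θ * Jm1) + (δ ^ 2) • (θ ^ 2 * Jm2)) -
      (Jm0 + δ • (θ * Jm1) + (δ ^ 2) • (θ ^ 2 * Jm2)) *
        (Jp0 + δ • (θ * Jp1) + (δ ^ 2) • (θ ^ 2 * Jp2)) =
      H + (δ ^ 2 / 6) • (θ ^ 2 * (H ^ 3 - H))) := by

  have swap : ∀ a b : A, a * (θ * b) = θ * (a * b) := fun a b => by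
    rw [← mul_assoc, ← hθc, mul_assoc]
  have cube : θ * θ * θ = 0 := by simpa [pow_succ] using hθnil
  have θ3 : ∀ x : A, θ * (θ * (θ * x)) = 0 := fun x => by
    rw [← mul_assoc, ← mul_assoc, cube, zero_mul]
  refine ⟨?_, ?_, ?_⟩
  · have e1 : H * (θ * Jp1) - (θ * Jp1) * H = θ * (2 * Jp1) := by
      rw [swap, mul_assoc, ← mul_sub, hp1]
    have e2 : H * (θ ^ 2 * Jp2) - (θ ^ 2 * Jp2) * H = θ ^ 2 * (2 * Jp2) := by
      rw [pow_two, mul_assoc, swap, swap, mul_assoc, mul_assoc, ← mul_sub, ← mul_sub, hp2, ← mul_assoc]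
    calc H * (Jp0 + δ • (θ * Jp1) + (δ ^ 2) • (θ ^ 2 * Jp2)) -
        (Jp0 + δ • (θ * Jp1) + (δ ^ 2) • (θ ^ 2 * Jp2)) * H
        = (H * Jp0 - Jp0 * H) + δ • (H * (θ * Jp1) - (θ * Jp1) * H)
            + (δ ^ 2) • (H * (θ ^ 2 * Jp2) - (θ ^ 2 * Jp2) * H) := by
          noncomm_ring; module
      _ = 2 * (Jp0 + δ • (θ * Jp1) + (δ ^ 2) • (θ ^ 2 * Jp2)) := by
          rw [hp0, e1, e2]; noncomm_ring; module
  · have e1 : H * (θ * Jm1) - (θ * Jm1) * H = θ * (-(2 * Jm1)) := by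
      rw [swap, mul_assoc, ← mul_sub, hm1]
    have e2 : H * (θ ^ 2 * Jm2) - (θ ^ 2 * Jm2) * H = θ ^ 2 * (-(2 * Jm2)) := by
      rw [pow_two, mul_assoc, swap, swap, mul_assoc, mul_assoc, ← mul_sub, ← mul_sub, hm2, ← mul_assoc]
    calc H * (Jm0 + δ • (θ * Jm1) + (δ ^ 2) • (θ ^ 2 * Jm2)) -
        (Jm0 + δ • (θ * Jm1) + (δ ^ 2) • (θ ^ 2 * Jm2)) * H
        = (H * Jm0 - Jm0 * H) + δ • (H * (θ * Jm1) - (θ * Jm1) * H)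
            + (δ ^ 2) • (H * (θ ^ 2 * Jm2) - (θ ^ 2 * Jm2) * H) := by
          noncomm_ring; module
      _ = -(2 * (Jm0 + δ • (θ * Jm1) + (δ ^ 2) • (θ ^ 2 * Jm2))) := by
          rw [hm0, e1, e2]; noncomm_ring; module
  · have key : (Jp0 + δ • (θ * Jp1) + (δ ^ 2) • (θ ^ 2 * Jp2)) *
          (Jm0 + δ • (θ * Jm1) + (δ ^ 2) • (θ ^ 2 * Jm2)) -
        (Jm0 + δ • (θ * Jm1) + (δ ^ 2) • (θ ^ 2 * Jm2)) *
          (Jp0 + δ • (θ * Jp1) + (δ ^ 2) • (θ ^ 2 * Jp2)) =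
        (Jp0 * Jm0 - Jm0 * Jp0)
        + δ • (θ * ((Jp0 * Jm1 - Jm1 * Jp0) + (Jp1 * Jm0 - Jm0 * Jp1)))
        + (δ ^ 2) • (θ * (θ * ((Jp0 * Jm2 - Jm2 * Jp0) + (Jp1 * Jm1 - Jm1 * Jp1) +
          (Jp2 * Jm0 - Jm0 * Jp2)))) := by
      simp only [pow_two, mul_assoc, add_mul, mul_add, smul_mul_assoc, mul_smul_comm,
        smul_smul, swap, θ3, smul_zero, mul_sub, sub_mul, smul_add, smul_sub]
      module
    rw [key, h00, h01, h02]
    simp only [mul_zero, smul_zero, mul_smul_comm, smul_smul, ← mul_assoc, ← pow_two]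
    module
end
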